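/- Let a > 0 and b > 0, and let X have the beta distribution of the first kind with density f(x) = (Γ(a+b)/(Γ(a)Γ(b))) x^{a−1} (1−x)^{b−1} on (0,1). Then for every t with 0 < t < 1, E(X | X > t) = a/(a+b) + (t(1−t)/(a+b)) r(t). -/

import Mathlib

open MeasureTheory Set ProbabilityTheory

/-!
With `q x = x (1 - x) / (a + b)`, the beta density satisfies the Pearson equation
`(q f)' = (a / (a + b) - x) f` on `(0, 1)`, and `q f`, a multiple of `x ^ a (1 - x) ^ b`,
vanishes at `1`. Integrating over `(t, 1)` gives `∫ x f = a / (a + b) · F̄ t + q t · f t`, and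
dividing by `F̄ t > 0` gives the formula.
-/

theorem setIntegral_id_mul_eq_of_hasDerivAt {f G : ℝ → ℝ} {μ t u : ℝ} (htu : t ≤ u)
    (hf : IntegrableOn f (Ioo t u)) (hG : ContinuousOn G (Icc t u)) (hGu : G u = 0)
    (hG' : ∀ x ∈ Ioo t u, HasDerivAt G ((μ - x) * f x) x) :
    ∫ x in Ioo t u, x * f x = μ * (∫ x in Ioo t u, f x) + G t := by
  have hxf : IntegrableOn (fun x => x * f x) (Ioo t u) :=
    hf.continuousOn_mul_of_subset continuousOn_id isCompact_Icc measurableSet_Ioo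
      Ioo_subset_Icc_self
  have hftc : ∫ x in Ioo t u, (μ * f x - x * f x) = G u - G t := by
    simp_rw [← sub_mul]
    rw [← integral_Ioc_eq_integral_Ioo, ← intervalIntegral.integral_of_le htu]
    refine intervalIntegral.integral_eq_sub_of_hasDerivAt_of_le htu hG hG' ?_
    rw [intervalIntegrable_iff_integrableOn_Ioo_of_le htu]
    simp_rw [sub_mul]
    exact (hf.const_mul μ).sub hxf
  rw [integral_sub (hf.const_mul μ) hxf, integral_const_mul, hGu] at hftc
  linarith

lemma rpow_mul_one_sub_rpow_eq {x : ℝ} (hx : x ∈ Ioo 0 1) (a b : ℝ) :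
    x ^ a * (1 - x) ^ b = x * (1 - x) * (x ^ (a - 1) * (1 - x) ^ (b - 1)) := by
  have hx0 : x ≠ 0 := hx.1.ne'
  have h1x : 1 - x ≠ 0 := (sub_pos.2 hx.2).ne'
  rw [Real.rpow_sub_one hx0, Real.rpow_sub_one h1x]
  field_simp

lemma hasDerivAt_rpow_mul_one_sub_rpow {x : ℝ} (hx : x ∈ Ioo 0 1) (a b : ℝ) :
    HasDerivAt (fun y => y ^ a * (1 - y) ^ b)
      ((a - (a + b) * x) * (x ^ (a - 1) * (1 - x) ^ (b - 1))) x := by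
  have hx0 : x ≠ 0 := hx.1.ne'
  have h1x : 1 - x ≠ 0 := (sub_pos.2 hx.2).ne'
  have hpow := Real.hasDerivAt_rpow_const (p := a) (Or.inl hx0)
  have hpow' := ((hasDerivAt_id x).const_sub 1).rpow_const (p := b) (Or.inl h1x)
  refine (hpow.mul hpow').congr_deriv ?_
  simp only [id]
  rw [Real.rpow_sub_one hx0, Real.rpow_sub_one h1x]
  field_simp
  ring

lemma integrable_betaPDFReal {a b : ℝ} (ha : 0 < a) (hb : 0 < b) :
    Integrable (betaPDFReal a b) := by
  have hnonneg : 0 ≤ᵐ[volume] betaPDFReal a b := ae_of_all _ fun x => by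
    by_cases hx : 0 < x ∧ x < 1
    · exact (betaPDFReal_pos hx.1 hx.2 ha hb).le
    · simp [betaPDFReal, hx]
  refine (lintegral_ofReal_ne_top_iff_integrable (by fun_prop) hnonneg).1 ?_
  have h := lintegral_betaPDF_eq_one ha hb
  simp only [betaPDF] at h
  simp [h]

lemma betaPDFReal_of_mem_Ioo {a b x : ℝ} (hx : x ∈ Ioo 0 1) :
    betaPDFReal a b x
      = Real.Gamma (a + b) / (Real.Gamma a * Real.Gamma b) * x ^ (a - 1) * (1 - x) ^ (b - 1) := by
  rw [betaPDFReal, if_pos (show 0 < x ∧ x < 1 from hx), beta, one_div_div]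

lemma setIntegral_Ioo_betaPDFReal_pos {a b t : ℝ} (ha : 0 < a) (hb : 0 < b)
    (ht : t ∈ Ioo 0 1) : 0 < ∫ x in Ioo t 1, betaPDFReal a b x := by
  rw [← integral_Ioc_eq_integral_Ioo, ← intervalIntegral.integral_of_le ht.2.le]
  refine intervalIntegral.intervalIntegral_pos_of_pos_on ?_
    (fun x hx => betaPDFReal_pos (ht.1.trans hx.1) hx.2 ha hb) ht.2
  exact (integrable_betaPDFReal ha hb).intervalIntegrable

theorem conditional_mean_of_beta_first_kind
    (a b : ℝ) (ha : 0 < a) (hb : 0 < b)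
    (f : ℝ → ℝ)
    (hf : ∀ x ∈ Set.Ioo (0 : ℝ) 1,
      f x = Real.Gamma (a + b) / (Real.Gamma a * Real.Gamma b)
        * x ^ (a - 1) * (1 - x) ^ (b - 1))
    (Fbar : ℝ → ℝ) (hFbar : ∀ t, Fbar t = ∫ x in Set.Ioo t 1, f x)
    (r : ℝ → ℝ) (hr : ∀ t, r t = f t / Fbar t)
    (t : ℝ) (ht : t ∈ Set.Ioo (0 : ℝ) 1) :
    (∫ x in Set.Ioo t 1, x * f x) / Fbar t
      = a / (a + b) + (t * (1 - t) / (a + b)) * r t := by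
  have hsub : Ioo t 1 ⊆ Ioo 0 1 := Ioo_subset_Ioo_left ht.1.le
  have hf_eq : EqOn f (betaPDFReal a b) (Ioo 0 1) := fun x hx => by
    rw [hf x hx, betaPDFReal_of_mem_Ioo hx]
  have hf_int : IntegrableOn f (Ioo t 1) :=
    (integrable_betaPDFReal ha hb).integrableOn.congr_fun (hf_eq.symm.mono hsub) measurableSet_Ioo
  have hFbar_pos : 0 < Fbar t := by
    rw [hFbar, setIntegral_congr_fun measurableSet_Ioo (hf_eq.mono hsub)]
    exact setIntegral_Ioo_betaPDFReal_pos ha hb ht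
  set C := Real.Gamma (a + b) / (Real.Gamma a * Real.Gamma b)
  set G : ℝ → ℝ := fun x => C / (a + b) * (x ^ a * (1 - x) ^ b)
  have hG_cont : Continuous G := by
    unfold G
    fun_prop (disch := positivity)
  have hG_one : G 1 = 0 := by simp [G, Real.zero_rpow hb.ne']
  have hG' : ∀ x ∈ Ioo t 1, HasDerivAt G ((a / (a + b) - x) * f x) x := fun x hx => by
    refine ((hasDerivAt_rpow_mul_one_sub_rpow (hsub hx) a b).const_mul
      (C / (a + b))).congr_deriv ?_
    rw [hf x (hsub hx)]
    field_simp
  have hG_t : G t = t * (1 - t) / (a + b) * f t := by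
    simp only [G]
    rw [rpow_mul_one_sub_rpow_eq ht, hf t ht]
    ring
  rw [setIntegral_id_mul_eq_of_hasDerivAt ht.2.le hf_int hG_cont.continuousOn hG_one hG',
    ← hFbar, hG_t, hr]
  field_simp
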